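/- Assume the set of saddle points of the Lagrangian l is nonempty, M₁ᵏ − (L/2)·Id ∈ S₊(H), M₁ᵏ ⪰ M₁^{k+1}, M₂ᵏ ∈ S₊(G), M₂ᵏ ⪰ M₂^{k+1} for all k ≥ 0, and let (xᵏ, zᵏ, yᵏ)_{k≥0} be the sequence generated by the variable-metric ADMM algorithm. Then Σ_{k≥0} ‖zᵏ − Ax^{k+1}‖² < +∞, Σ_{k≥0} ‖xᵏ − x^{k+1}‖²_{M₁ᵏ − (L/2)Id} < +∞, and Σ_{k≥0} ‖zᵏ − z^{k+1}‖²_{M₂ᵏ} < +∞. -/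

import Mathlib

open scoped InnerProductSpace
open Filter

noncomputable section

section OpDefs

variable {E F : Type*} [NormedAddCommGroup E] [InnerProductSpace ℝ E]
  [NormedAddCommGroup F] [InnerProductSpace ℝ F]

/-- `U ∈ S₊(E)`: continuous linear, self-adjoint and positive semidefinite. -/
def IsSplusOp (U : E →L[ℝ] E) : Prop :=
  (∀ x y : E, ⟪U x, y⟫_ℝ = ⟪x, U y⟫_ℝ) ∧ ∀ x : E, 0 ≤ ⟪x, U x⟫_ℝ

/-- The squared seminorm `‖x‖²_U := ⟪x, U x⟫`. -/
def opSq (U : E →L[ℝ] E) (x : E) : ℝ := ⟪x, U x⟫_ℝ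

/-- Loewner order `U ⪰ V`. -/
def opLE (U V : E →L[ℝ] E) : Prop := ∀ x : E, ⟪x, V x⟫_ℝ ≤ ⟪x, U x⟫_ℝ

/-- `U ∈ P_α(E)`, i.e. `U ∈ S₊(E)` and `U ⪰ α·Id`. -/
def IsPalphaOp (α : ℝ) (U : E →L[ℝ] E) : Prop :=
  IsSplusOp U ∧ ∀ x : E, α * ‖x‖ ^ 2 ≤ ⟪x, U x⟫_ℝ

/-- Properness of an extended-real-valued function. -/
def ERealProper (f : E → EReal) : Prop := (∀ x, f x ≠ ⊥) ∧ ∃ x, f x ≠ ⊤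

/-- Convexity of an extended-real-valued function. -/
def ERealConvex (f : E → EReal) : Prop :=
  ∀ x y : E, ∀ a b : ℝ, 0 ≤ a → 0 ≤ b → a + b = 1 →
    f (a • x + b • y) ≤ (a : EReal) * f x + (b : EReal) * f y

/-- Weak convergence of a sequence in a Hilbert space, tested against inner products. -/
def WeakConv (u : ℕ → E) (p : E) : Prop :=
  ∀ w : E, Tendsto (fun k => ⟪u k, w⟫_ℝ) atTop (nhds ⟪p, w⟫_ℝ)

/-- The Lagrangian `l(x,z,y) = f(x) + g(z) + ⟪y, Ax - z⟫`. -/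
def Lagr (f : E → EReal) (g : F → EReal) (A : E →L[ℝ] F) (p : E) (q v : F) : EReal :=
  f p + g q + ((⟪v, A p - q⟫_ℝ : ℝ) : EReal)

/-- The Lagrangian with an additional smooth summand `h`:
`l(x,z,y) = f(x) + h(x) + g(z) + ⟪y, Ax - z⟫`. -/
def LagrH (f : E → EReal) (h : E → ℝ) (g : F → EReal) (A : E →L[ℝ] F)
    (p : E) (q v : F) : EReal :=
  f p + ((h p : ℝ) : EReal) + g q + ((⟪v, A p - q⟫_ℝ : ℝ) : EReal)

/-- `(xs, zs, ys)` is a saddle point of `l`. -/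
def IsSaddle (l : E → F → F → EReal) (xs : E) (zs ys : F) : Prop :=
  ∀ (p : E) (q v : F), l xs zs v ≤ l xs zs ys ∧ l xs zs ys ≤ l p q ys

/-- `xk1` is a minimizer of `u ↦ f u + (c/2)‖Au - zk + c⁻¹ yk‖² + (1/2)‖u - xk‖²_M`. -/
def IsXUpdate (f : E → EReal) (A : E →L[ℝ] F) (c : ℝ) (M : E →L[ℝ] E)
    (xk : E) (zk yk : F) (xk1 : E) : Prop :=
  ∀ u : E,
    f xk1 + (((c/2) * ‖A xk1 - zk + c⁻¹ • yk‖ ^ 2 + (1/2) * opSq M (xk1 - xk) : ℝ) : EReal) ≤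
    f u + (((c/2) * ‖A u - zk + c⁻¹ • yk‖ ^ 2 + (1/2) * opSq M (u - xk) : ℝ) : EReal)

/-- `xk1` is a minimizer of the `x`-subproblem with linearized smooth part:
`u ↦ f u + ⟪u - xk, ∇h(xk)⟫ + (c/2)‖Au - zk + c⁻¹ yk‖² + (1/2)‖u - xk‖²_M`. -/
def IsXUpdateGrad (f : E → EReal) (h' : E → E) (A : E →L[ℝ] F) (c : ℝ) (M : E →L[ℝ] E)
    (xk : E) (zk yk : F) (xk1 : E) : Prop :=
  ∀ u : E,
    f xk1 + ((⟪xk1 - xk, h' xk⟫_ℝ + (c/2) * ‖A xk1 - zk + c⁻¹ • yk‖ ^ 2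
        + (1/2) * opSq M (xk1 - xk) : ℝ) : EReal) ≤
    f u + ((⟪u - xk, h' xk⟫_ℝ + (c/2) * ‖A u - zk + c⁻¹ • yk‖ ^ 2
        + (1/2) * opSq M (u - xk) : ℝ) : EReal)

/-- `zk1` is a minimizer of `w ↦ g w + (c/2)‖Ax - w + c⁻¹ yk‖² + (1/2)‖w - zk‖²_M`. -/
def IsZUpdate (g : F → EReal) (c : ℝ) (M : F →L[ℝ] F)
    (Ax zk yk zk1 : F) : Prop :=
  ∀ w : F,
    g zk1 + (((c/2) * ‖Ax - zk1 + c⁻¹ • yk‖ ^ 2 + (1/2) * opSq M (zk1 - zk) : ℝ) : EReal) ≤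
    g w + (((c/2) * ‖Ax - w + c⁻¹ • yk‖ ^ 2 + (1/2) * opSq M (w - zk) : ℝ) : EReal)

end OpDefs

/-!
Adding the variational inequalities of the two subproblems to those of the saddle point
`(x*, z*, y*)`, and bounding the gradient term by cocoercivity of `∇h` (Baillon–Haddad),
gives the Fejér-type inequality `E_{k+1} + d_k ≤ E_k` for the energy
`E_k = ‖yᵏ - y*‖² + c²‖zᵏ - z*‖² + c‖xᵏ - x*‖²_{M₁ᵏ} + c‖zᵏ - z*‖²_{M₂ᵏ}`,
where `d_k` is `c²‖zᵏ - Ax^{k+1}‖² + c‖xᵏ - x^{k+1}‖²_{M₁ᵏ - (L/2)Id} + c‖zᵏ - z^{k+1}‖²_{M₂ᵏ}`.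
The metrics decrease, so `E` telescopes and `∑ d_k ≤ E_0`.
-/

open Set Topology
open scoped NNReal

section SmoothConvex

variable {E : Type*} [NormedAddCommGroup E] [InnerProductSpace ℝ E] [CompleteSpace E]
  {h : E → ℝ} {h' : E → E} {K : ℝ≥0}

theorem hasDerivAt_comp_lineMap_of_hasGradientAt (hgrad : ∀ p, HasGradientAt h (h' p) p)
    (a b : E) (t : ℝ) :
    HasDerivAt (fun s => h (AffineMap.lineMap a b s)) ⟪h' (AffineMap.lineMap a b t), b - a⟫_ℝ t :=
  (hgrad _).hasFDerivAt.comp_hasDerivAt t AffineMap.hasDerivAt_lineMap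

theorem ConvexOn.inner_gradient_le_sub (hconv : ConvexOn ℝ univ h)
    (hgrad : ∀ p, HasGradientAt h (h' p) p) (a b : E) :
    ⟪h' a, b - a⟫_ℝ ≤ h b - h a := by
  have hline : ConvexOn ℝ univ (fun s => h (AffineMap.lineMap a b s)) :=
    hconv.comp_affineMap (AffineMap.lineMap a b)
  simpa [slope_def_field] using hline.le_slope_of_hasDerivAt (mem_univ 0) (mem_univ 1)
    zero_lt_one (hasDerivAt_comp_lineMap_of_hasGradientAt hgrad a b 0)

theorem descent_lemma (hgrad : ∀ p, HasGradientAt h (h' p) p) (hlip : LipschitzWith K h')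
    (a b : E) : h b ≤ h a + ⟪h' a, b - a⟫_ℝ + K / 2 * ‖b - a‖ ^ 2 := by
  set ψ : ℝ → ℝ := fun t =>
    h (AffineMap.lineMap a b t) - t * ⟪h' a, b - a⟫_ℝ - t ^ 2 * (K / 2 * ‖b - a‖ ^ 2)
  have hψ : ∀ t, HasDerivAt ψ (⟪h' (AffineMap.lineMap a b t), b - a⟫_ℝ - ⟪h' a, b - a⟫_ℝ
      - 2 * t * (K / 2 * ‖b - a‖ ^ 2)) t := fun t =>
    (((hasDerivAt_comp_lineMap_of_hasGradientAt hgrad a b t).sub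
      ((hasDerivAt_id t).mul_const _)).sub ((hasDerivAt_pow 2 t).mul_const _)).congr_deriv
      (by simp)
  have hψ' : ∀ t ∈ interior (Icc (0 : ℝ) 1), ⟪h' (AffineMap.lineMap a b t), b - a⟫_ℝ
      - ⟪h' a, b - a⟫_ℝ - 2 * t * (K / 2 * ‖b - a‖ ^ 2) ≤ 0 := by
    intro t ht
    rw [interior_Icc] at ht
    have hdist : ‖AffineMap.lineMap a b t - a‖ = t * ‖b - a‖ := by
      rw [← dist_eq_norm, dist_lineMap_left, Real.norm_of_nonneg ht.1.le, dist_comm,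
        dist_eq_norm]
    suffices ⟪h' (AffineMap.lineMap a b t), b - a⟫_ℝ - ⟪h' a, b - a⟫_ℝ
        ≤ 2 * t * (K / 2 * ‖b - a‖ ^ 2) by linarith
    calc ⟪h' (AffineMap.lineMap a b t), b - a⟫_ℝ - ⟪h' a, b - a⟫_ℝ
          = ⟪h' (AffineMap.lineMap a b t) - h' a, b - a⟫_ℝ := (inner_sub_left _ _ _).symm
      _ ≤ ‖h' (AffineMap.lineMap a b t) - h' a‖ * ‖b - a‖ := real_inner_le_norm _ _
      _ ≤ K * ‖AffineMap.lineMap a b t - a‖ * ‖b - a‖ := by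
          gcongr; exact hlip.norm_sub_le _ _
      _ = 2 * t * (K / 2 * ‖b - a‖ ^ 2) := by rw [hdist]; ring
  have hanti := antitoneOn_of_hasDerivWithinAt_nonpos (convex_Icc 0 1)
    (fun t _ => (hψ t).continuousAt.continuousWithinAt) (fun t _ => (hψ t).hasDerivWithinAt) hψ'
  have := hanti (left_mem_Icc.2 zero_le_one) (right_mem_Icc.2 zero_le_one) zero_le_one
  simp only [ψ, AffineMap.lineMap_apply_zero, AffineMap.lineMap_apply_one] at this
  linarith

theorem ConvexOn.add_inner_add_norm_gradient_sub_sq_le (hconv : ConvexOn ℝ univ h)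
    (hgrad : ∀ p, HasGradientAt h (h' p) p) (hlip : LipschitzWith K h') (hK : 0 < K) (a b : E) :
    h a + ⟪h' a, b - a⟫_ℝ + 1 / (2 * K) * ‖h' b - h' a‖ ^ 2 ≤ h b := by
  set v := h' b - h' a
  -- `w` minimises the descent-lemma bound at `b` for `h - ⟪h' a, ·⟫`, a function minimal at `a`.
  set w := b - (K : ℝ)⁻¹ • v with hw
  have hmin := hconv.inner_gradient_le_sub hgrad a w
  have hdesc := descent_lemma hgrad hlip b w
  have hwa : w - a = (b - a) - (K : ℝ)⁻¹ • v := by rw [hw]; abel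
  have hwb : w - b = -((K : ℝ)⁻¹ • v) := by rw [hw]; abel
  rw [hwa, inner_sub_right, real_inner_smul_right] at hmin
  rw [hwb, inner_neg_right, real_inner_smul_right, norm_neg, norm_smul, mul_pow,
    Real.norm_eq_abs, sq_abs] at hdesc
  have hv : ⟪h' b, v⟫_ℝ - ⟪h' a, v⟫_ℝ = ‖v‖ ^ 2 := by
    rw [← inner_sub_left, real_inner_self_eq_norm_sq]
  have hK' : (K : ℝ) ≠ 0 := by exact_mod_cast hK.ne'
  have hcoef : (K : ℝ) / 2 * ((K : ℝ)⁻¹ ^ 2 * ‖v‖ ^ 2)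
      = (K : ℝ)⁻¹ * ‖v‖ ^ 2 - 1 / (2 * K) * ‖v‖ ^ 2 := by
    field_simp; ring
  linear_combination hmin + hdesc - (K : ℝ)⁻¹ * hv + hcoef

theorem ConvexOn.inv_mul_norm_gradient_sub_sq_le (hconv : ConvexOn ℝ univ h)
    (hgrad : ∀ p, HasGradientAt h (h' p) p) (hlip : LipschitzWith K h') (hK : 0 < K) (a b : E) :
    1 / K * ‖h' a - h' b‖ ^ 2 ≤ ⟪h' a - h' b, a - b⟫_ℝ := by
  have hab := hconv.add_inner_add_norm_gradient_sub_sq_le hgrad hlip hK a b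
  have hba := hconv.add_inner_add_norm_gradient_sub_sq_le hgrad hlip hK b a
  have e : ⟪h' a - h' b, a - b⟫_ℝ = -⟪h' a, b - a⟫_ℝ - ⟪h' b, a - b⟫_ℝ := by
    rw [inner_sub_left, ← neg_sub b a, inner_neg_right]
  rw [norm_sub_rev] at hab
  rw [e]
  linear_combination hab + hba

theorem ConvexOn.inner_gradient_sub_le (hconv : ConvexOn ℝ univ h)
    (hgrad : ∀ p, HasGradientAt h (h' p) p) (hlip : LipschitzWith K h') (hK : 0 < K) (a s p : E) :
    ⟪h' a - h' s, s - p⟫_ℝ ≤ K / 4 * ‖p - a‖ ^ 2 := by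
  have hcoco := hconv.inv_mul_norm_gradient_sub_sq_le hgrad hlip hK a s
  set v := h' a - h' s
  have hsq : 0 ≤ ‖v - ((K : ℝ) / 2) • (a - p)‖ ^ 2 := sq_nonneg _
  rw [norm_sub_sq_real, real_inner_smul_right, norm_smul, Real.norm_of_nonneg (by positivity),
    norm_sub_rev a p] at hsq
  have e : ⟪v, s - p⟫_ℝ = ⟪v, a - p⟫_ℝ - ⟪v, a - s⟫_ℝ := by
    rw [← inner_sub_right]; congr 1; abel
  have hK' : (K : ℝ) ≠ 0 := by exact_mod_cast hK.ne'
  rw [e]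
  have e' : 1 / K * (‖v‖ ^ 2 - 2 * (K / 2 * ⟪v, a - p⟫_ℝ) + (K / 2 * ‖p - a‖) ^ 2)
      = 1 / K * ‖v‖ ^ 2 - ⟪v, a - p⟫_ℝ + K / 4 * ‖p - a‖ ^ 2 := by
    field_simp; ring
  linarith [mul_nonneg (one_div_nonneg.2 K.coe_nonneg) hsq]

end SmoothConvex

theorem EReal.ne_top_of_add_coe_le_add_coe {a b : EReal} {r s : ℝ} (h : a + r ≤ b + s)
    (hb : b ≠ ⊤) : a ≠ ⊤ :=
  (EReal.add_ne_top_iff_of_ne_bot_of_ne_top (EReal.coe_ne_bot r) (EReal.coe_ne_top r)).1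
    (ne_top_of_le_ne_top (EReal.add_ne_top hb (EReal.coe_ne_top s)) h)

section ConvexVariational

variable {E : Type*} [NormedAddCommGroup E] [InnerProductSpace ℝ E] {f : E → EReal}

-- First-order optimality at a minimiser `x₀` of `f + Q`: `D` bounds the one-sided derivative of
-- `Q` at `x₀` in the direction `u - x₀`.
theorem ERealConvex.toReal_le_add_of_isMin (hf : ERealConvex f) (hbot : ∀ p, f p ≠ ⊥)
    {Q : E → ℝ} {x₀ u : E} {D C : ℝ} (hu : f u ≠ ⊤)
    (hQ : ∀ t ∈ Ioc (0 : ℝ) 1, Q (x₀ + t • (u - x₀)) ≤ Q x₀ + t * D + t ^ 2 * C)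
    (hmin : ∀ w, f x₀ + (Q x₀ : EReal) ≤ f w + (Q w : EReal)) :
    (f x₀).toReal ≤ (f u).toReal + D := by
  set p := (f x₀).toReal
  set q := (f u).toReal
  have hp : f x₀ = p :=
    (EReal.coe_toReal (EReal.ne_top_of_add_coe_le_add_coe (hmin u) hu) (hbot x₀)).symm
  have hq : f u = q := (EReal.coe_toReal hu (hbot u)).symm
  have hslope : ∀ t ∈ Ioc (0 : ℝ) 1, p - q - D ≤ t * C := by
    intro t ht
    have hseg : f (x₀ + t • (u - x₀)) ≤ (((1 - t) * p + t * q : ℝ) : EReal) := by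
      have := hf x₀ u (1 - t) t (by linarith [ht.2]) ht.1.le (by ring)
      rwa [hp, hq, ← EReal.coe_mul, ← EReal.coe_mul, ← EReal.coe_add,
        show (1 - t) • x₀ + t • u = x₀ + t • (u - x₀) by module] at this
    have hcomp := (hmin _).trans (add_le_add_left hseg _)
    rw [hp, ← EReal.coe_add, ← EReal.coe_add, EReal.coe_le_coe_iff] at hcomp
    have : t * (p - q - D) ≤ t * (t * C) := by linear_combination hcomp + hQ t ht
    exact le_of_mul_le_mul_left this ht.1
  have hlim : Tendsto (fun t : ℝ => t * C) (𝓝[>] 0) (𝓝 0) := by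
    simpa using ((continuous_mul_const C).tendsto' 0 (0 * C) rfl).mono_left nhdsWithin_le_nhds
  have := ge_of_tendsto hlim (eventually_of_mem (Ioc_mem_nhdsGT zero_lt_one) hslope)
  linarith

end ConvexVariational

section QuadraticForm

variable {E : Type*} [NormedAddCommGroup E] [InnerProductSpace ℝ E] {U : E →L[ℝ] E}

theorem IsSplusOp.isSymmetric (hU : IsSplusOp U) : (U : E →ₗ[ℝ] E).IsSymmetric := hU.1

theorem IsSplusOp.opSq_nonneg (hU : IsSplusOp U) (v : E) : 0 ≤ opSq U v := hU.2 v

theorem opSq_add_smul (hU : (U : E →ₗ[ℝ] E).IsSymmetric) (v w : E) (t : ℝ) :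
    opSq U (v + t • w) = opSq U v + t * (2 * ⟪U v, w⟫_ℝ) + t ^ 2 * opSq U w := by
  have hsymm : ⟪v, U w⟫_ℝ = ⟪U v, w⟫_ℝ := (hU v w).symm
  simp only [opSq, map_add, map_smul, inner_add_left, inner_add_right, real_inner_smul_left,
    real_inner_smul_right, hsymm, real_inner_comm (U v) w]
  ring

theorem norm_add_smul_sq (v w : E) (t : ℝ) :
    ‖v + t • w‖ ^ 2 = ‖v‖ ^ 2 + t * (2 * ⟪v, w⟫_ℝ) + t ^ 2 * ‖w‖ ^ 2 := by
  rw [norm_add_sq_real, real_inner_smul_right, norm_smul, mul_pow, Real.norm_eq_abs, sq_abs]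
  ring

theorem two_mul_inner_map_sub_eq (hU : (U : E →ₗ[ℝ] E).IsSymmetric) (a b c : E) :
    2 * ⟪U (a - b), c - a⟫_ℝ = opSq U (b - c) - opSq U (b - a) - opSq U (a - c) := by
  have := opSq_add_smul hU (b - a) (a - c) 1
  have e : ⟪U (b - a), a - c⟫_ℝ = ⟪U (a - b), c - a⟫_ℝ := by
    rw [← neg_sub a b, ← neg_sub c a, map_neg, inner_neg_neg]
  rw [show b - a + (1 : ℝ) • (a - c) = b - c by module, e] at this
  linear_combination -this

theorem opSq_id (v : E) : opSq (ContinuousLinearMap.id ℝ E) v = ‖v‖ ^ 2 :=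
  real_inner_self_eq_norm_sq v

theorem two_mul_inner_sub_eq (a b c : E) :
    2 * ⟪a - b, c - a⟫_ℝ = ‖b - c‖ ^ 2 - ‖b - a‖ ^ 2 - ‖a - c‖ ^ 2 := by
  simpa only [opSq_id, ContinuousLinearMap.id_apply] using
    two_mul_inner_map_sub_eq (U := ContinuousLinearMap.id ℝ E) (fun _ _ => rfl) a b c

theorem opSq_sub_smul_id (r : ℝ) (v : E) :
    opSq (U - r • ContinuousLinearMap.id ℝ E) v = opSq U v - r * ‖v‖ ^ 2 := by
  simp [opSq, inner_sub_right, real_inner_smul_right]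

end QuadraticForm

theorem summable_of_add_le {e d : ℕ → ℝ} (he : ∀ k, 0 ≤ e k) (hd : ∀ k, 0 ≤ d k)
    (h : ∀ k, e (k + 1) + d k ≤ e k) : Summable d := by
  refine summable_of_sum_range_le (c := e 0) hd fun n => ?_
  have : ∑ i ∈ Finset.range n, d i ≤ ∑ i ∈ Finset.range n, (e i - e (i + 1)) :=
    Finset.sum_le_sum fun i _ => by linarith [h i]
  rw [Finset.sum_range_sub'] at this
  linarith [he n]

section Optimality

variable {H G : Type*} [NormedAddCommGroup H] [InnerProductSpace ℝ H]
  [NormedAddCommGroup G] [InnerProductSpace ℝ G]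
  {f : H → EReal} {g : G → EReal} {h : H → ℝ} {h' : H → H} {A : H →L[ℝ] G} {c : ℝ}

theorem IsXUpdateGrad.toReal_le {M : H →L[ℝ] H} {x x' : H} {z y : G}
    (hx : IsXUpdateGrad f h' A c M x z y x') (hf : ERealConvex f) (hbot : ∀ p, f p ≠ ⊥)
    (hM : (M : H →ₗ[ℝ] H).IsSymmetric) {u : H} (hu : f u ≠ ⊤) :
    (f x').toReal ≤ (f u).toReal + (⟪u - x', h' x⟫_ℝ
      + c * ⟪A x' - z + c⁻¹ • y, A u - A x'⟫_ℝ + ⟪M (x' - x), u - x'⟫_ℝ) := by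
  refine hf.toReal_le_add_of_isMin hbot
    (Q := fun ξ => ⟪ξ - x, h' x⟫_ℝ + c / 2 * ‖A ξ - z + c⁻¹ • y‖ ^ 2 + 1 / 2 * opSq M (ξ - x))
    (C := c / 2 * ‖A u - A x'‖ ^ 2 + 1 / 2 * opSq M (u - x')) hu (fun t _ => le_of_eq ?_) hx
  rw [show x' + t • (u - x') - x = (x' - x) + t • (u - x') by abel,
    show A (x' + t • (u - x')) - z + c⁻¹ • y = (A x' - z + c⁻¹ • y) + t • (A u - A x') by
      rw [map_add, map_smul, map_sub]; abel,
    inner_add_left, real_inner_smul_left, norm_add_smul_sq, opSq_add_smul hM]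
  ring

theorem IsZUpdate.toReal_le {M : G →L[ℝ] G} {w z y z' : G}
    (hz : IsZUpdate g c M w z y z') (hg : ERealConvex g) (hbot : ∀ q, g q ≠ ⊥)
    (hM : (M : G →ₗ[ℝ] G).IsSymmetric) {v : G} (hv : g v ≠ ⊤) :
    (g z').toReal ≤ (g v).toReal
      + (c * ⟪w - z' + c⁻¹ • y, z' - v⟫_ℝ + ⟪M (z' - z), v - z'⟫_ℝ) := by
  refine hg.toReal_le_add_of_isMin hbot
    (Q := fun ζ => c / 2 * ‖w - ζ + c⁻¹ • y‖ ^ 2 + 1 / 2 * opSq M (ζ - z))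
    (C := c / 2 * ‖z' - v‖ ^ 2 + 1 / 2 * opSq M (v - z')) hv (fun t _ => le_of_eq ?_) hz
  rw [show z' + t • (v - z') - z = (z' - z) + t • (v - z') by abel,
    show w - (z' + t • (v - z')) + c⁻¹ • y = (w - z' + c⁻¹ • y) + t • (z' - v) by module,
    norm_add_smul_sq, opSq_add_smul hM]
  ring

theorem lagrH_eq_add_coe_left {p : H} {q v : G} {γ : ℝ} (hg : g q = γ) :
    LagrH f h g A p q v = f p + ((h p + γ + ⟪v, A p - q⟫_ℝ : ℝ) : EReal) := by
  simp only [LagrH, hg, EReal.coe_add]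
  abel

theorem lagrH_eq_add_coe_right {p : H} {q v : G} {φ : ℝ} (hf : f p = φ) :
    LagrH f h g A p q v = g q + ((φ + h p + ⟪v, A p - q⟫_ℝ : ℝ) : EReal) := by
  simp only [LagrH, hf, EReal.coe_add]
  abel

theorem lagrH_ne_top_iff (hf : ∀ p, f p ≠ ⊥) (hg : ∀ q, g q ≠ ⊥) {p : H} {q v : G} :
    LagrH f h g A p q v ≠ ⊤ ↔ f p ≠ ⊤ ∧ g q ≠ ⊤ := by
  rw [LagrH, EReal.add_ne_top_iff_of_ne_bot_of_ne_top (EReal.coe_ne_bot _) (EReal.coe_ne_top _),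
    EReal.add_ne_top_iff_ne_top₂ (EReal.add_ne_bot_iff.2 ⟨hf p, EReal.coe_ne_bot _⟩) (hg q),
    EReal.add_ne_top_iff_of_ne_bot_of_ne_top (EReal.coe_ne_bot _) (EReal.coe_ne_top _)]

variable {xs : H} {zs ys : G}

theorem IsSaddle.ne_top (hsad : IsSaddle (LagrH f h g A) xs zs ys) (hfp : ERealProper f)
    (hgp : ERealProper g) : f xs ≠ ⊤ ∧ g zs ≠ ⊤ := by
  obtain ⟨x₀, hx₀⟩ := hfp.2
  obtain ⟨z₀, hz₀⟩ := hgp.2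
  rw [← lagrH_ne_top_iff hfp.1 hgp.1 (h := h) (A := A) (v := ys)]
  exact ne_top_of_le_ne_top ((lagrH_ne_top_iff hfp.1 hgp.1).2 ⟨hx₀, hz₀⟩) (hsad x₀ z₀ ys).2

theorem IsSaddle.map_eq (hsad : IsSaddle (LagrH f h g A) xs zs ys) {φ γ : ℝ} (hf : f xs = φ)
    (hg : g zs = γ) : A xs = zs := by
  have hle := (hsad xs zs (ys + (A xs - zs))).1
  rw [lagrH_eq_add_coe_left hg, lagrH_eq_add_coe_left hg, hf, ← EReal.coe_add,
    ← EReal.coe_add, EReal.coe_le_coe_iff, inner_add_left, real_inner_self_eq_norm_sq] at hle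
  rw [← sub_eq_zero, ← norm_eq_zero]
  exact pow_eq_zero_iff two_ne_zero |>.1 (le_antisymm (by linarith) (sq_nonneg _))

theorem IsSaddle.toReal_le_left [CompleteSpace H] {K : ℝ≥0}
    (hsad : IsSaddle (LagrH f h g A) xs zs ys) (hf : ERealConvex f) (hbot : ∀ p, f p ≠ ⊥)
    (hgrad : ∀ p, HasGradientAt h (h' p) p) (hlip : LipschitzWith K h') {γ : ℝ}
    (hg : g zs = γ) {p : H} (hp : f p ≠ ⊤) :
    (f xs).toReal ≤ (f p).toReal + (⟪h' xs, p - xs⟫_ℝ + ⟪ys, A p - A xs⟫_ℝ) := by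
  refine hf.toReal_le_add_of_isMin hbot (Q := fun ξ => h ξ + γ + ⟪ys, A ξ - zs⟫_ℝ)
    (C := K / 2 * ‖p - xs‖ ^ 2) hp (fun t _ => ?_)
    (fun w => by simpa only [lagrH_eq_add_coe_left hg] using (hsad w zs ys).2)
  have hdesc := descent_lemma hgrad hlip xs (xs + t • (p - xs))
  rw [add_sub_cancel_left, real_inner_smul_right, norm_smul, mul_pow, Real.norm_eq_abs,
    sq_abs] at hdesc
  have e : ⟪ys, A (xs + t • (p - xs)) - zs⟫_ℝ = ⟪ys, A xs - zs⟫_ℝ + t * ⟪ys, A p - A xs⟫_ℝ := by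
    rw [← real_inner_smul_right, ← inner_add_right, map_add, map_smul, map_sub]
    congr 1
    abel
  simp only [e]
  linarith

theorem IsSaddle.toReal_le_right (hsad : IsSaddle (LagrH f h g A) xs zs ys)
    (hg : ERealConvex g) (hbot : ∀ q, g q ≠ ⊥) {φ : ℝ} (hf : f xs = φ) {q : G}
    (hq : g q ≠ ⊤) : (g zs).toReal ≤ (g q).toReal + ⟪ys, zs - q⟫_ℝ := by
  refine hg.toReal_le_add_of_isMin hbot (Q := fun ζ => φ + h xs + ⟪ys, A xs - ζ⟫_ℝ) (C := 0) hq
    (fun t _ => le_of_eq ?_)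
    (fun w => by simpa only [lagrH_eq_add_coe_right hf] using (hsad xs w ys).2)
  rw [show A xs - (zs + t • (q - zs)) = (A xs - zs) + t • (zs - q) by module, inner_add_right,
    real_inner_smul_right]
  ring

end Optimality

section Energy

variable {H G : Type*} [NormedAddCommGroup H] [InnerProductSpace ℝ H]
  [NormedAddCommGroup G] [InnerProductSpace ℝ G]

def admmEnergy (c : ℝ) (M₁ : H →L[ℝ] H) (M₂ : G →L[ℝ] G) (xs : H) (zs ys : G) (x : H)
    (z y : G) : ℝ :=
  ‖y - ys‖ ^ 2 + c ^ 2 * ‖z - zs‖ ^ 2 + c * opSq M₁ (x - xs) + c * opSq M₂ (z - zs)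

variable {A : H →L[ℝ] G} {M₁ M₁' : H →L[ℝ] H} {M₂ M₂' : G →L[ℝ] G} {c : ℝ}
  {xs x x' : H} {zs ys z z' y y' : G}

-- `hvi` is the sum of the optimality conditions of one step and of the saddle point, with the
-- gradient term already bounded through cocoercivity.
theorem admmEnergy_add_le_of_inner_nonneg (hM₁ : (M₁ : H →ₗ[ℝ] H).IsSymmetric)
    (hM₂ : (M₂ : G →ₗ[ℝ] G).IsSymmetric) (hc : 0 < c) {r : ℝ} (hy : y' = y + c • (A x' - z'))
    (hAxs : A xs = zs)
    (hvi : 0 ≤ r / 4 * ‖x' - x‖ ^ 2 + ⟪y' + c • (z' - z), A xs - A x'⟫_ℝ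
      + ⟪M₁ (x' - x), xs - x'⟫_ℝ + ⟪ys, A x' - A xs⟫_ℝ + ⟪y', z' - zs⟫_ℝ
      + ⟪M₂ (z' - z), zs - z'⟫_ℝ + ⟪ys, zs - z'⟫_ℝ) :
    admmEnergy c M₁ M₂ xs zs ys x' z' y' + (c ^ 2 * ‖z - A x'‖ ^ 2
      + c * opSq (M₁ - (r / 2) • ContinuousLinearMap.id ℝ H) (x - x') + c * opSq M₂ (z - z'))
      ≤ admmEnergy c M₁ M₂ xs zs ys x z y := by
  subst hAxs
  set w := A x'
  have hyy : y' - y = c • (w - z') := by rw [hy]; abel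
  have hy_inner : c * (⟪y', A xs - w⟫_ℝ + ⟪ys, w - A xs⟫_ℝ + ⟪y', z' - A xs⟫_ℝ + ⟪ys, A xs - z'⟫_ℝ)
      = ⟪y' - y, ys - y'⟫_ℝ := by
    rw [hyy]
    simp only [inner_sub_right, real_inner_smul_right, real_inner_comm]
    ring
  have hy_norm : ‖y - y'‖ ^ 2 = c ^ 2 * ‖z' - w‖ ^ 2 := by
    rw [norm_sub_rev, hyy, norm_smul, mul_pow, Real.norm_eq_abs, sq_abs, norm_sub_rev]
  have hz_split : ⟪z' - z, A xs - w⟫_ℝ = ⟪z' - z, A xs - z'⟫_ℝ - ⟪z' - z, w - z'⟫_ℝ := by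
    rw [← inner_sub_right]; congr 1; abel
  rw [inner_add_left, real_inner_smul_left] at hvi
  have hx_M₁ := two_mul_inner_map_sub_eq hM₁ x' x xs
  have hz_M₂ := two_mul_inner_map_sub_eq hM₂ z' z (A xs)
  have hy_sq := two_mul_inner_sub_eq y' y ys
  have hz_sq := two_mul_inner_sub_eq z' z (A xs)
  have hw_sq := two_mul_inner_sub_eq z' z w
  rw [norm_sub_rev x' x] at hvi
  simp only [admmEnergy, opSq_sub_smul_id]
  linear_combination (2 * c) * hvi + 2 * hy_inner + hy_sq - hy_norm + c ^ 2 * hz_sq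
    - c ^ 2 * hw_sq + c * hx_M₁ + c * hz_M₂ + (2 * c ^ 2) * hz_split

theorem admmEnergy_nonneg (hc : 0 ≤ c) (hM₁ : ∀ v, 0 ≤ opSq M₁ v) (hM₂ : ∀ v, 0 ≤ opSq M₂ v) :
    0 ≤ admmEnergy c M₁ M₂ xs zs ys x z y := by
  have := hM₁ (x - xs)
  have := hM₂ (z - zs)
  unfold admmEnergy
  positivity

theorem admmEnergy_le_of_opLE (hc : 0 ≤ c) (h₁ : opLE M₁ M₁') (h₂ : opLE M₂ M₂') :
    admmEnergy c M₁' M₂' xs zs ys x z y ≤ admmEnergy c M₁ M₂ xs zs ys x z y := by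
  unfold admmEnergy
  gcongr
  exacts [h₁ _, h₂ _]

theorem admmEnergy_step [CompleteSpace H] {f : H → EReal} {g : G → EReal} {h : H → ℝ}
    {h' : H → H} {K : ℝ≥0}
    (hfp : ERealProper f) (hfc : ERealConvex f) (hgp : ERealProper g) (hgc : ERealConvex g)
    (hconv : ConvexOn ℝ univ h) (hgrad : ∀ p, HasGradientAt h (h' p) p)
    (hlip : LipschitzWith K h') (hK : 0 < K) (hc : 0 < c)
    (hM₁ : (M₁ : H →ₗ[ℝ] H).IsSymmetric) (hM₂ : (M₂ : G →ₗ[ℝ] G).IsSymmetric)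
    (hx : IsXUpdateGrad f h' A c M₁ x z y x') (hz : IsZUpdate g c M₂ (A x') z y z')
    (hy : y' = y + c • (A x' - z')) (hsad : IsSaddle (LagrH f h g A) xs zs ys) :
    admmEnergy c M₁ M₂ xs zs ys x' z' y' + (c ^ 2 * ‖z - A x'‖ ^ 2
      + c * opSq (M₁ - ((K : ℝ) / 2) • ContinuousLinearMap.id ℝ H) (x - x')
      + c * opSq M₂ (z - z')) ≤ admmEnergy c M₁ M₂ xs zs ys x z y := by
  obtain ⟨hfxs, hgzs⟩ := hsad.ne_top hfp hgp
  have hφ : f xs = (f xs).toReal := (EReal.coe_toReal hfxs (hfp.1 xs)).symm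
  have hγ : g zs = (g zs).toReal := (EReal.coe_toReal hgzs (hgp.1 zs)).symm
  have hfx' : f x' ≠ ⊤ := EReal.ne_top_of_add_coe_le_add_coe (hx xs) hfxs
  have hgz' : g z' ≠ ⊤ := EReal.ne_top_of_add_coe_le_add_coe (hz zs) hgzs
  have vx := hx.toReal_le hfc hfp.1 hM₁ hfxs
  have vxs := hsad.toReal_le_left hfc hfp.1 hgrad hlip hγ hfx'
  have vz := hz.toReal_le hgc hgp.1 hM₂ hgzs
  have vzs := hsad.toReal_le_right hgc hgp.1 hφ hgz'
  have hcoco := hconv.inner_gradient_sub_le hgrad hlip hK x xs x'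
  have hgrad_sum : ⟪xs - x', h' x⟫_ℝ + ⟪h' xs, x' - xs⟫_ℝ = ⟪h' x - h' xs, xs - x'⟫_ℝ := by
    rw [real_inner_comm, inner_sub_left, ← neg_sub xs x', inner_neg_right]
    ring
  have hyx : c * ⟪A x' - z + c⁻¹ • y, A xs - A x'⟫_ℝ = ⟪y' + c • (z' - z), A xs - A x'⟫_ℝ := by
    rw [← real_inner_smul_left, smul_add, smul_inv_smul₀ hc.ne', hy]
    congr 1
    module
  have hyz : c * ⟪A x' - z' + c⁻¹ • y, z' - zs⟫_ℝ = ⟪y', z' - zs⟫_ℝ := by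
    rw [← real_inner_smul_left, smul_add, smul_inv_smul₀ hc.ne', hy]
    congr 1
    module
  exact admmEnergy_add_le_of_inner_nonneg hM₁ hM₂ hc hy (hsad.map_eq hφ hγ) (by linarith)

end Energy

theorem stmt13_general {H G : Type*}
    [NormedAddCommGroup H] [InnerProductSpace ℝ H] [CompleteSpace H]
    [NormedAddCommGroup G] [InnerProductSpace ℝ G]
    (f : H → EReal) (g : G → EReal)
    (hfp : ERealProper f) (hfc : ERealConvex f)
    (hgp : ERealProper g) (hgc : ERealConvex g)
    (h : H → ℝ) (h' : H → H) (L : ℝ) (hL : 0 < L)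
    (hconv : ConvexOn ℝ Set.univ h)
    (hgrad : ∀ p : H, HasGradientAt h (h' p) p)
    (hlip : LipschitzWith (Real.toNNReal L) h')
    (A : H →L[ℝ] G) (c : ℝ) (hc : 0 < c)
    (M₁ : ℕ → (H →L[ℝ] H)) (M₂ : ℕ → (G →L[ℝ] G))
    (hM₁ : ∀ k : ℕ, IsSplusOp (M₁ k)) (hM₂ : ∀ k : ℕ, IsSplusOp (M₂ k))
    (hM₁L : ∀ k : ℕ, IsSplusOp (M₁ k - (L/2) • ContinuousLinearMap.id ℝ H))
    (hM₁mono : ∀ k : ℕ, opLE (M₁ k) (M₁ (k+1)))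
    (hM₂mono : ∀ k : ℕ, opLE (M₂ k) (M₂ (k+1)))
    (x : ℕ → H) (z y : ℕ → G)
    (hx : ∀ k : ℕ, IsXUpdateGrad f h' A c (M₁ k) (x k) (z k) (y k) (x (k+1)))
    (hz : ∀ k : ℕ, IsZUpdate g c (M₂ k) (A (x (k+1))) (z k) (y k) (z (k+1)))
    (hy : ∀ k : ℕ, y (k+1) = y k + c • (A (x (k+1)) - z (k+1)))
    (hsaddle : ∃ (xs : H) (zs ys : G), IsSaddle (LagrH f h g A) xs zs ys) :
    Summable (fun k : ℕ => ‖z k - A (x (k+1))‖ ^ 2) ∧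
    Summable (fun k : ℕ => opSq (M₁ k - (L/2) • ContinuousLinearMap.id ℝ H) (x k - x (k+1))) ∧
    Summable (fun k : ℕ => opSq (M₂ k) (z k - z (k+1))) := by
  obtain ⟨xs, zs, ys, hsad⟩ := hsaddle
  have hd₁ (k : ℕ) : 0 ≤ c ^ 2 * ‖z k - A (x (k+1))‖ ^ 2 := by positivity
  have hd₂ (k : ℕ) := mul_nonneg hc.le ((hM₁L k).opSq_nonneg (x k - x (k+1)))
  have hd₃ (k : ℕ) := mul_nonneg hc.le ((hM₂ k).opSq_nonneg (z k - z (k+1)))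
  have hsum := summable_of_add_le
    (e := fun k => admmEnergy c (M₁ k) (M₂ k) xs zs ys (x k) (z k) (y k))
    (fun k => admmEnergy_nonneg hc.le (hM₁ k).opSq_nonneg (hM₂ k).opSq_nonneg)
    (fun k => add_nonneg (add_nonneg (hd₁ k) (hd₂ k)) (hd₃ k)) fun k => by
      have hstep := admmEnergy_step hfp hfc hgp hgc hconv hgrad hlip (Real.toNNReal_pos.2 hL) hc
        (hM₁ k).isSymmetric (hM₂ k).isSymmetric (hx k) (hz k) (hy k) hsad
      rw [Real.coe_toNNReal L hL.le] at hstep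
      exact (add_le_add_left (admmEnergy_le_of_opLE hc.le (hM₁mono k) (hM₂mono k)) _).trans hstep
  refine ⟨(summable_mul_left_iff (pow_ne_zero 2 hc.ne')).1 ?_,
    (summable_mul_left_iff hc.ne').1 ?_, (summable_mul_left_iff hc.ne').1 ?_⟩ <;>
    refine hsum.of_nonneg_of_le (by assumption) fun k => ?_
  · linarith [hd₂ k, hd₃ k]
  · linarith [hd₁ k, hd₃ k]
  · linarith [hd₁ k, hd₂ k]

theorem stmt13 {H G : Type*}
    [NormedAddCommGroup H] [InnerProductSpace ℝ H] [CompleteSpace H]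
    [NormedAddCommGroup G] [InnerProductSpace ℝ G] [CompleteSpace G]
    (f : H → EReal) (g : G → EReal)
    (hfp : ERealProper f) (hfc : ERealConvex f) (hfl : LowerSemicontinuous f)
    (hgp : ERealProper g) (hgc : ERealConvex g) (hgl : LowerSemicontinuous g)
    (h : H → ℝ) (h' : H → H) (L : ℝ) (hL : 0 < L)
    (hconv : ConvexOn ℝ Set.univ h)
    (hgrad : ∀ p : H, HasGradientAt h (h' p) p)
    (hlip : LipschitzWith (Real.toNNReal L) h')
    (A : H →L[ℝ] G) (c : ℝ) (hc : 0 < c)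
    (M₁ : ℕ → (H →L[ℝ] H)) (M₂ : ℕ → (G →L[ℝ] G))
    (hM₁ : ∀ k : ℕ, IsSplusOp (M₁ k)) (hM₂ : ∀ k : ℕ, IsSplusOp (M₂ k))
    (hM₁L : ∀ k : ℕ, IsSplusOp (M₁ k - (L/2) • ContinuousLinearMap.id ℝ H))
    (hM₁mono : ∀ k : ℕ, opLE (M₁ k) (M₁ (k+1)))
    (hM₂mono : ∀ k : ℕ, opLE (M₂ k) (M₂ (k+1)))
    (x : ℕ → H) (z y : ℕ → G)
    (hx : ∀ k : ℕ, IsXUpdateGrad f h' A c (M₁ k) (x k) (z k) (y k) (x (k+1)))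
    (hz : ∀ k : ℕ, IsZUpdate g c (M₂ k) (A (x (k+1))) (z k) (y k) (z (k+1)))
    (hy : ∀ k : ℕ, y (k+1) = y k + c • (A (x (k+1)) - z (k+1)))
    (hsaddle : ∃ (xs : H) (zs ys : G), IsSaddle (LagrH f h g A) xs zs ys) :
    Summable (fun k : ℕ => ‖z k - A (x (k+1))‖ ^ 2) ∧
    Summable (fun k : ℕ => opSq (M₁ k - (L/2) • ContinuousLinearMap.id ℝ H) (x k - x (k+1))) ∧
    Summable (fun k : ℕ => opSq (M₂ k) (z k - z (k+1))) :=
  stmt13_general f g hfp hfc hgp hgc h h' L hL hconv hgrad hlip A c hc M₁ M₂ hM₁ hM₂ hM₁L hM₁mono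
    hM₂mono x z y hx hz hy hsaddle
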